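/- Let n ≥ 2 and let i₀, j₀ ∈ {1, …, n} with i₀ ≠ j₀. Let T be the n×n complex matrix whose (i₀, j₀) entry is 1 and all of whose other entries are 0, acting on ℓ_p^n. Then the numerical range V_p(T) is the closed disc centered at the origin of radius (1/p)^{1/p}·(1/q)^{1/q}, and v_p(T) = (1/p)^{1/p}·(1/q)^{1/q}. -/

import Mathlib

open Complex Real

/-- The `ℓ_p` norm on `ℂⁿ`. -/
noncomputable def lpNorm {n : ℕ} (p : ℝ) (x : Fin n → ℂ) : ℝ :=
  (∑ k, ‖x k‖ ^ p) ^ (1 / p)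

/-- The numerical range of an `n × n` complex matrix acting on `ℓ_pⁿ`.
Note that when `x k = 0` the corresponding term vanishes since `conj (x k) = 0`. -/
noncomputable def numRange {n : ℕ} (p : ℝ) (T : Matrix (Fin n) (Fin n) ℂ) : Set ℂ :=
  { z | ∃ x : Fin n → ℂ, lpNorm p x = 1 ∧
      z = ∑ k, T.mulVec x k * (starRingEnd ℂ) (x k) * ((‖x k‖ ^ (p - 2) : ℝ) : ℂ) }

/-- The numerical radius of an `n × n` complex matrix acting on `ℓ_pⁿ`. -/
noncomputable def numRadius {n : ℕ} (p : ℝ) (T : Matrix (Fin n) (Fin n) ℂ) : ℝ :=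
  sSup ((fun z : ℂ => ‖z‖) '' numRange p T)

lemma aux_young (p q u v : ℝ) (hp : 1 < p) (hq : 1 < q) (hpq : 1/p + 1/q = 1)
    (hu : 0 ≤ u) (hv : 0 ≤ v) :
    u ^ (1/q) * v ^ (1/p) ≤ ((1/p) ^ (1/p) * (1/q) ^ (1/q)) * (u + v) := by
  have hp0 : (0:ℝ) < p := by linarith
  have hq0 : (0:ℝ) < q := by linarith
  have h1 := Real.geom_mean_le_arith_mean2_weighted
    (by positivity : (0:ℝ) ≤ 1/q) (by positivity : (0:ℝ) ≤ 1/p)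
    (mul_nonneg hq0.le hu) (mul_nonneg hp0.le hv) (by linarith)
  have e1 : (q*u)^(1/q) = q^(1/q) * u^(1/q) := Real.mul_rpow hq0.le hu
  have e2 : (p*v)^(1/p) = p^(1/p) * v^(1/p) := Real.mul_rpow hp0.le hv
  have e3 : (1/q)^(1/q) * q^(1/q) = 1 := by
    rw [← Real.mul_rpow (by positivity) hq0.le, one_div_mul_cancel hq0.ne', Real.one_rpow]
  have e4 : (1/p)^(1/p) * p^(1/p) = 1 := by
    rw [← Real.mul_rpow (by positivity) hp0.le, one_div_mul_cancel hp0.ne', Real.one_rpow]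
  have hM : (0:ℝ) ≤ (1/p)^(1/p) * (1/q)^(1/q) := by positivity
  have key : u ^ (1/q) * v ^ (1/p)
      = ((1/p)^(1/p) * (1/q)^(1/q)) * ((q*u)^(1/q) * (p*v)^(1/p)) := by
    rw [e1, e2]
    calc u ^ (1/q) * v ^ (1/p)
        = ((1/q)^(1/q) * q^(1/q)) * ((1/p)^(1/p) * p^(1/p)) * (u^(1/q) * v^(1/p)) := by
          rw [e3, e4]; ring
      _ = (1/p)^(1/p) * (1/q)^(1/q) * (q ^ (1/q) * u ^ (1/q) * (p ^ (1/p) * v ^ (1/p))) := by ring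
  rw [key]
  have h2 : 1/q * (q*u) + 1/p * (p*v) = u + v := by field_simp
  calc ((1/p)^(1/p) * (1/q)^(1/q)) * ((q*u)^(1/q) * (p*v)^(1/p))
      ≤ ((1/p)^(1/p) * (1/q)^(1/q)) * (1/q * (q*u) + 1/p * (p*v)) :=
        mul_le_mul_of_nonneg_left h1 hM
    _ = ((1/p)^(1/p) * (1/q)^(1/q)) * (u + v) := by rw [h2]

theorem single_entry_numRange_is_disc (n : ℕ) (hn : 2 ≤ n) (i₀ j₀ : Fin n) (hij : i₀ ≠ j₀)
    (p q : ℝ) (hp : 1 < p) (hq : q = p / (p - 1))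
    (T : Matrix (Fin n) (Fin n) ℂ)
    (hT : ∀ i j, T i j = if i = i₀ ∧ j = j₀ then 1 else 0) :
    numRange p T = { z : ℂ | ‖z‖ ≤ (1 / p) ^ (1 / p) * (1 / q) ^ (1 / q) } ∧
    numRadius p T = (1 / p) ^ (1 / p) * (1 / q) ^ (1 / q) := by
  have hp0 : (0:ℝ) < p := by linarith
  have hpm1 : (0:ℝ) < p - 1 := by linarith
  have hq1 : 1 < q := by
    rw [hq, lt_div_iff₀ hpm1]; linarith
  have hq0 : (0:ℝ) < q := by linarith
  have hpq : 1/p + 1/q = 1 := by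
    rw [hq]; field_simp; ring
  set M : ℝ := (1/p) ^ (1/p) * (1/q) ^ (1/q) with hM
  have hM0 : 0 ≤ M := by positivity
  -- generic computations for any x
  have hmv : ∀ x : Fin n → ℂ, ∀ k, T.mulVec x k = if k = i₀ then x j₀ else 0 := by
    intro x k
    simp only [Matrix.mulVec, dotProduct, hT, ite_and, ite_mul, one_mul, zero_mul]
    by_cases hk : k = i₀ <;> simp [hk]
  have hsum : ∀ x : Fin n → ℂ,
      (∑ k, T.mulVec x k * (starRingEnd ℂ) (x k) * ((‖x k‖ ^ (p - 2) : ℝ) : ℂ))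
      = x j₀ * (starRingEnd ℂ) (x i₀) * ((‖x i₀‖ ^ (p - 2) : ℝ) : ℂ) := by
    intro x
    rw [Finset.sum_eq_single i₀]
    · rw [hmv]; simp
    · intro k _ hk
      rw [hmv]; simp [hk]
    · simp
  have hset : numRange p T = { z : ℂ | ‖z‖ ≤ M } := by
    ext z
    constructor
    · rintro ⟨x, hx1, hz⟩
      rw [hsum] at hz
      set a : ℝ := ‖x i₀‖ with ha
      set b : ℝ := ‖x j₀‖ with hb
      have ha0 : 0 ≤ a := norm_nonneg _
      have hb0 : 0 ≤ b := norm_nonneg _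
      have hSnn : 0 ≤ ∑ k, ‖x k‖ ^ p :=
        Finset.sum_nonneg fun k _ => Real.rpow_nonneg (norm_nonneg _) p
      have hS1 : ∑ k, ‖x k‖ ^ p = 1 := by
        have h := congrArg (fun s => s ^ p) hx1
        simp only [lpNorm] at h
        rwa [← Real.rpow_mul hSnn, one_div_mul_cancel hp0.ne', Real.rpow_one,
          Real.one_rpow] at h
      have hab : a^p + b^p ≤ 1 := by
        have heq : a^p + b^p = ∑ k ∈ ({i₀, j₀} : Finset (Fin n)), ‖x k‖ ^ p := by
          rw [Finset.sum_pair hij]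
        rw [heq, ← hS1]
        exact Finset.sum_le_sum_of_subset_of_nonneg (Finset.subset_univ _)
          (fun k _ _ => Real.rpow_nonneg (norm_nonneg _) p)
      show ‖z‖ ≤ M
      rcases eq_or_lt_of_le ha0 with h0 | hapos
      · have hx0 : x i₀ = 0 := by
          have : ‖x i₀‖ = 0 := h0.symm
          exact norm_eq_zero.mp this
        rw [hz, hx0]
        simpa using hM0
      · have hzabs : ‖z‖ = b * (a * a^(p-2)) := by
          rw [hz, norm_mul, norm_mul]
          rw [Complex.norm_conj, Complex.norm_real, Real.norm_eq_abs, _root_.abs_of_nonneg (Real.rpow_nonneg ha0 _)]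
          ring
        have haa : a * a^(p-2) = a^(p-1) := by
          have h2 : a^(p-1) = a^(1+(p-2)) := by congr 1; ring
          rw [h2, Real.rpow_add hapos, Real.rpow_one]
        have eb : (b^p)^(1/p) = b := by
          rw [← Real.rpow_mul hb0, mul_one_div, div_self hp0.ne', Real.rpow_one]
        have ea : (a^p)^(1/q) = a^(p-1) := by
          rw [← Real.rpow_mul ha0]
          congr 1
          rw [hq]; field_simp
        calc ‖z‖ = b * a^(p-1) := by rw [hzabs, haa]
          _ = (a^p)^(1/q) * (b^p)^(1/p) := by rw [eb, ea]; ring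
          _ ≤ M * (a^p + b^p) :=
              aux_young p q _ _ hp hq1 hpq (Real.rpow_nonneg ha0 p) (Real.rpow_nonneg hb0 p)
          _ ≤ M * 1 := mul_le_mul_of_nonneg_left hab hM0
          _ = M := mul_one M
    · intro hzM
      have hzM : ‖z‖ ≤ M := hzM
      set r : ℝ := ‖z‖ with hr
      have hcont : ContinuousOn (fun t : ℝ => t^(1/q) * (1-t)^(1/p)) (Set.Icc 0 (1/q)) := by
        apply Continuous.continuousOn
        exact (Real.continuous_rpow_const (by positivity)).mul
          ((Real.continuous_rpow_const (by positivity)).comp (continuous_const.sub continuous_id))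
      have hval0 : (0:ℝ)^(1/q) * (1-(0:ℝ))^(1/p) = 0 := by
        rw [Real.zero_rpow (one_div_ne_zero hq0.ne')]; ring
      have hvalq : ((1:ℝ)/q)^(1/q) * (1-1/q)^(1/p) = M := by
        have h1 : 1 - 1/q = 1/p := by linarith
        rw [h1, hM]; ring
      have hmem : r ∈ Set.Icc ((fun t : ℝ => t^(1/q) * (1-t)^(1/p)) 0)
          ((fun t : ℝ => t^(1/q) * (1-t)^(1/p)) (1/q)) := by
        simp only [hval0, hvalq]
        exact ⟨norm_nonneg z, hzM⟩
      obtain ⟨t, htmem, hft⟩ :=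
        intermediate_value_Icc (by positivity : (0:ℝ) ≤ 1/q) hcont hmem
      simp only at hft
      obtain ⟨ht0, ht1⟩ := htmem
      have h1t : 0 < 1 - t := by
        have hq1' : 1/q < 1 := by rw [div_lt_one hq0]; exact hq1
        linarith
      have ha0 : 0 ≤ t^(1/p) := Real.rpow_nonneg ht0 _
      have hb0 : 0 ≤ (1-t)^(1/p) := Real.rpow_nonneg h1t.le _
      have hap : (t^(1/p))^p = t := by
        rw [← Real.rpow_mul ht0, one_div_mul_cancel hp0.ne', Real.rpow_one]
      have hbp : ((1-t)^(1/p))^p = 1 - t := by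
        rw [← Real.rpow_mul h1t.le, one_div_mul_cancel hp0.ne', Real.rpow_one]
      have hapm1 : (t^(1/p))^(p-1) = t^(1/q) := by
        rw [← Real.rpow_mul ht0]
        congr 1
        rw [hq]; field_simp
      set c : ℂ := if z = 0 then (((1-t)^(1/p) : ℝ) : ℂ)
        else (((1-t)^(1/p) / r : ℝ) : ℂ) * z with hc
      have hcabs : ‖c‖ = (1-t)^(1/p) := by
        by_cases hz0 : z = 0
        · rw [hc, if_pos hz0, Complex.norm_real, Real.norm_eq_abs, _root_.abs_of_nonneg hb0]
        · have hr0 : 0 < r := norm_pos_iff.mpr hz0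
          rw [hc, if_neg hz0, norm_mul, Complex.norm_real, Real.norm_eq_abs,
            _root_.abs_of_nonneg (div_nonneg hb0 hr0.le), ← hr]
          field_simp
      set x : Fin n → ℂ := fun k => if k = i₀ then ((t^(1/p):ℝ):ℂ)
        else if k = j₀ then c else 0 with hxdef
      have hxi : x i₀ = ((t^(1/p):ℝ):ℂ) := by simp [hxdef]
      have hxj : x j₀ = c := by simp [hxdef, hij.symm]
      have hxabs : ∀ k, ‖x k‖ ^ p
          = (if k = i₀ then t else 0) + (if k = j₀ then 1 - t else 0) := by
        intro k
        by_cases hk : k = i₀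
        · subst hk
          rw [hxi, Complex.norm_real, Real.norm_eq_abs, _root_.abs_of_nonneg ha0, hap]
          simp [hij]
        · by_cases hk' : k = j₀
          · subst hk'
            rw [hxj, hcabs, hbp]
            simp [hk]
          · have : x k = 0 := by simp [hxdef, hk, hk']
            rw [this]
            simp [hk, hk', Real.zero_rpow hp0.ne']
      have hx1 : lpNorm p x = 1 := by
        unfold lpNorm
        rw [Finset.sum_congr rfl (fun k _ => hxabs k), Finset.sum_add_distrib,
          Finset.sum_ite_eq' Finset.univ i₀, Finset.sum_ite_eq' Finset.univ j₀]
        simp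
      refine ⟨x, hx1, ?_⟩
      rw [hsum, hxi, hxj]
      by_cases hz0 : z = 0
      · have hr0 : r = 0 := by rw [hr, hz0, norm_zero]
        have ht : t = 0 := by
          by_contra h
          have htpos : 0 < t := lt_of_le_of_ne ht0 (Ne.symm h)
          have hpos : 0 < t^(1/q) * (1-t)^(1/p) :=
            mul_pos (Real.rpow_pos_of_pos htpos _) (Real.rpow_pos_of_pos h1t _)
          rw [hft, hr0] at hpos
          exact lt_irrefl 0 hpos
        rw [hz0, ht, Real.zero_rpow (one_div_ne_zero hp0.ne')]
        simp
      · have hr0 : 0 < r := norm_pos_iff.mpr hz0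
        have ht0' : 0 < t := by
          rcases lt_or_eq_of_le ht0 with h | h
          · exact h
          · exfalso
            rw [← h] at hft
            rw [hval0] at hft
            rw [← hft] at hr0
            exact lt_irrefl 0 hr0
        have hapos : 0 < t^(1/p) := Real.rpow_pos_of_pos ht0' _
        rw [hc, if_neg hz0, Complex.conj_ofReal, Complex.norm_real, Real.norm_eq_abs, _root_.abs_of_nonneg ha0]
        have hkey : (1-t)^(1/p) / r * (t^(1/p) * (t^(1/p))^(p-2)) = 1 := by
          have e : t^(1/p) * (t^(1/p))^(p-2) = (t^(1/p))^(p-1) := by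
            have h2 : (t^(1/p))^(p-1) = (t^(1/p))^(1+(p-2)) := by congr 1; ring
            rw [h2, Real.rpow_add hapos, Real.rpow_one]
          have hfr : (1-t)^(1/p) * t^(1/q) = r := by rw [← hft]; ring
          rw [e, hapm1, div_mul_eq_mul_div, hfr, div_self hr0.ne']
        have hpush : (((1-t)^(1/p)/r : ℝ):ℂ) * z * ((t^(1/p):ℝ):ℂ) * (((t^(1/p))^(p-2):ℝ):ℂ)
            = z * ((((1-t)^(1/p)/r * (t^(1/p) * (t^(1/p))^(p-2))):ℝ):ℂ) := by
          push_cast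
          ring
        rw [hpush, hkey]
        simp
  refine ⟨hset, ?_⟩
  have himg : (fun z : ℂ => ‖z‖) '' numRange p T = Set.Icc 0 M := by
    rw [hset]
    ext s
    constructor
    · rintro ⟨z, hz, rfl⟩
      exact ⟨norm_nonneg z, hz⟩
    · rintro ⟨hs0, hsM⟩
      refine ⟨(s:ℂ), ?_, by show ‖((s:ℝ):ℂ)‖ = s; rw [Complex.norm_real, Real.norm_eq_abs, _root_.abs_of_nonneg hs0]⟩
      show ‖((s:ℝ):ℂ)‖ ≤ M
      rwa [Complex.norm_real, Real.norm_eq_abs, _root_.abs_of_nonneg hs0]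
  rw [numRadius, himg, csSup_Icc hM0]
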